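/- The relatedness of CES and CESH configurations is preserved under heap growth: if h ⊆ h' (every binding of h is a binding of h') and R_Cfg cfg (c, e, s, h), then R_Cfg cfg (c, e, s, h'). -/

import Mathlib

mutual
inductive Instr : Type where
  | var : Nat → Instr
  | clos : Code → Instr
  | appl : Instr
  | lit : Nat → Instr
  | op : (Nat → Nat → Nat) → Instr
inductive Code : Type where
  | seq : Instr → Code → Code
  | cond : Code → Code → Code
  | END : Code
  | RET : Code
end

namespace CES

inductive Value : Type where
  | nat : Nat → Value
  | clos : Code → List Value → Value

abbrev Env := List Value

inductive StackElem : Type where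
  | val : Value → StackElem
  | cont : Code → Env → StackElem

abbrev Stack := List StackElem
abbrev Config := Code × Env × Stack

/-- The CES machine transition relation. -/
inductive Step : Config → Config → Prop where
  | var {n : Nat} {c : Code} {e : Env} {s : Stack} {v : Value} :
      e[n]? = some v →
      Step (.seq (.var n) c, e, s) (c, e, .val v :: s)
  | clos {c' c : Code} {e : Env} {s : Stack} :
      Step (.seq (.clos c') c, e, s) (c, e, .val (.clos c' e) :: s)
  | appl {c c' : Code} {e e' : Env} {v : Value} {s : Stack} :
      Step (.seq .appl c, e, .val v :: .val (.clos c' e') :: s)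
           (c', v :: e', .cont c e :: s)
  | ret {c : Code} {e e' : Env} {v : Value} {s : Stack} :
      Step (.RET, e, .val v :: .cont c e' :: s) (c, e', .val v :: s)
  | lit {n : Nat} {c : Code} {e : Env} {s : Stack} :
      Step (.seq (.lit n) c, e, s) (c, e, .val (.nat n) :: s)
  | op {f : Nat → Nat → Nat} {c : Code} {e : Env} {n₁ n₂ : Nat} {s : Stack} :
      Step (.seq (.op f) c, e, .val (.nat n₁) :: .val (.nat n₂) :: s)
           (c, e, .val (.nat (f n₁ n₂)) :: s)
  | cond0 {c c' : Code} {e : Env} {s : Stack} :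
      Step (.cond c c', e, .val (.nat 0) :: s) (c, e, s)
  | condS {c c' : Code} {e : Env} {n : Nat} {s : Stack} :
      Step (.cond c c', e, .val (.nat (n+1)) :: s) (c', e, s)

end CES

namespace CESH

abbrev Ptr : Type := Nat

inductive Value : Type where
  | nat : Nat → Value
  | clos : Ptr → Value

abbrev Env := List Value
abbrev Closure := Code × Env

inductive StackElem : Type where
  | val : Value → StackElem
  | cont : Closure → StackElem

abbrev Stack := List StackElem
abbrev Heap := List Closure
abbrev Config := Code × Env × Stack × Heap

/-- The CESH machine transition relation, with a list-based heap. -/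
inductive Step : Config → Config → Prop where
  | var {n : Nat} {c : Code} {e : Env} {s : Stack} {h : Heap} {v : Value} :
      e[n]? = some v →
      Step (.seq (.var n) c, e, s, h) (c, e, .val v :: s, h)
  | clos {c' c : Code} {e : Env} {s : Stack} {h : Heap} :
      Step (.seq (.clos c') c, e, s, h)
           (c, e, .val (.clos h.length) :: s, h ++ [(c', e)])
  | appl {c c' : Code} {e e' : Env} {v : Value} {ptr : Ptr} {s : Stack} {h : Heap} :
      h[ptr]? = some (c', e') →
      Step (.seq .appl c, e, .val v :: .val (.clos ptr) :: s, h)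
           (c', v :: e', .cont (c, e) :: s, h)
  | ret {c : Code} {e e' : Env} {v : Value} {s : Stack} {h : Heap} :
      Step (.RET, e, .val v :: .cont (c, e') :: s, h) (c, e', .val v :: s, h)
  | lit {n : Nat} {c : Code} {e : Env} {s : Stack} {h : Heap} :
      Step (.seq (.lit n) c, e, s, h) (c, e, .val (.nat n) :: s, h)
  | op {f : Nat → Nat → Nat} {c : Code} {e : Env} {n₁ n₂ : Nat} {s : Stack} {h : Heap} :
      Step (.seq (.op f) c, e, .val (.nat n₁) :: .val (.nat n₂) :: s, h)
           (c, e, .val (.nat (f n₁ n₂)) :: s, h)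
  | cond0 {c c' : Code} {e : Env} {s : Stack} {h : Heap} :
      Step (.cond c c', e, .val (.nat 0) :: s, h) (c, e, s, h)
  | condS {c c' : Code} {e : Env} {n : Nat} {s : Stack} {h : Heap} :
      Step (.cond c c', e, .val (.nat (n+1)) :: s, h) (c', e, s, h)

end CESH

mutual
/-- Relation between CES values and CESH values, parameterised by the CESH heap:
equal naturals are related, and a CES closure is related to a pointer that
dereferences to a componentwise-related CESH closure. -/
inductive RVal (h : CESH.Heap) : CES.Value → CESH.Value → Prop where
  | nat {n : Nat} : RVal h (.nat n) (.nat n)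
  | clos {c : Code} {e₁ : CES.Env} {e₂ : CESH.Env} {ptr : CESH.Ptr} :
      h[ptr]? = some (c, e₂) → REnv h e₁ e₂ → RVal h (.clos c e₁) (.clos ptr)
/-- Pointwise relation between CES and CESH environments. -/
inductive REnv (h : CESH.Heap) : CES.Env → CESH.Env → Prop where
  | nil : REnv h [] []
  | cons {v₁ : CES.Value} {e₁ : CES.Env} {v₂ : CESH.Value} {e₂ : CESH.Env} :
      RVal h v₁ v₂ → REnv h e₁ e₂ → REnv h (v₁ :: e₁) (v₂ :: e₂)
end

/-- Relation between CES closures and CESH closures: equal code, related environments. -/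
def RClos (h : CESH.Heap) (cl₁ : Code × CES.Env) (cl₂ : CESH.Closure) : Prop :=
  cl₁.1 = cl₂.1 ∧ REnv h cl₁.2 cl₂.2

/-- Relation between CES and CESH stack elements. -/
inductive RStackElem (h : CESH.Heap) : CES.StackElem → CESH.StackElem → Prop where
  | val {v₁ : CES.Value} {v₂ : CESH.Value} :
      RVal h v₁ v₂ → RStackElem h (.val v₁) (.val v₂)
  | cont {c : Code} {e₁ : CES.Env} {e₂ : CESH.Env} :
      REnv h e₁ e₂ → RStackElem h (.cont c e₁) (.cont (c, e₂))

/-- Pointwise relation between stacks. -/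
def RStack (h : CESH.Heap) : CES.Stack → CESH.Stack → Prop :=
  List.Forall₂ (RStackElem h)

/-- The relation between CES and CESH configurations. -/
def RCfg : CES.Config → CESH.Config → Prop :=
  fun cfg₁ cfg₂ =>
    match cfg₁, cfg₂ with
    | (c₁, e₁, s₁), (c₂, e₂, s₂, h) => c₁ = c₂ ∧ REnv h e₁ e₂ ∧ RStack h s₁ s₂

/-- The sub-heap relation: every binding of `h` is a binding of `h'`. -/
def HeapSub (h h' : CESH.Heap) : Prop :=
  ∀ (ptr : Nat) x, h[ptr]? = some x → h'[ptr]? = some x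

section HeapGrowth

variable {h h' : CESH.Heap}

mutual
theorem RVal.mono (hsub : HeapSub h h') {v₁ : CES.Value} {v₂ : CESH.Value} :
    RVal h v₁ v₂ → RVal h' v₁ v₂
  | .nat => .nat
  | .clos hget he => .clos (hsub _ _ hget) (REnv.mono hsub he)

theorem REnv.mono (hsub : HeapSub h h') {e₁ : CES.Env} {e₂ : CESH.Env} :
    REnv h e₁ e₂ → REnv h' e₁ e₂
  | .nil => .nil
  | .cons hv he => .cons (RVal.mono hsub hv) (REnv.mono hsub he)
end

theorem RClos.mono (hsub : HeapSub h h') {cl₁ : Code × CES.Env} {cl₂ : CESH.Closure}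
    (hcl : RClos h cl₁ cl₂) : RClos h' cl₁ cl₂ :=
  ⟨hcl.1, hcl.2.mono hsub⟩

theorem RStackElem.mono (hsub : HeapSub h h') {x₁ : CES.StackElem} {x₂ : CESH.StackElem} :
    RStackElem h x₁ x₂ → RStackElem h' x₁ x₂
  | .val hv => .val (hv.mono hsub)
  | .cont he => .cont (he.mono hsub)

theorem RStack.mono (hsub : HeapSub h h') {s₁ : CES.Stack} {s₂ : CESH.Stack}
    (hs : RStack h s₁ s₂) : RStack h' s₁ s₂ :=
  hs.imp fun _ _ => RStackElem.mono hsub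

end HeapGrowth

/-- Relatedness of CES and CESH configurations (and of the value, environment,
closure and stack components of the relation) is preserved under heap growth. -/
theorem RCfg_heap_update (h h' : CESH.Heap) (hsub : HeapSub h h') :
    (∀ v₁ v₂, RVal h v₁ v₂ → RVal h' v₁ v₂) ∧
    (∀ e₁ e₂, REnv h e₁ e₂ → REnv h' e₁ e₂) ∧
    (∀ cl₁ cl₂, RClos h cl₁ cl₂ → RClos h' cl₁ cl₂) ∧
    (∀ s₁ s₂, RStack h s₁ s₂ → RStack h' s₁ s₂) ∧
    (∀ (cfg : CES.Config) (c : Code) (e : CESH.Env) (s : CESH.Stack),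
      RCfg cfg (c, e, s, h) → RCfg cfg (c, e, s, h')) :=
  ⟨fun _ _ => RVal.mono hsub, fun _ _ => REnv.mono hsub, fun _ _ => RClos.mono hsub,
    fun _ _ => RStack.mono hsub,
    fun ⟨_, _, _⟩ _ _ _ ⟨hc, he, hs⟩ => ⟨hc, he.mono hsub, hs.mono hsub⟩⟩
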